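/- arXiv:1811.06155 — 2 statements merged into one kernel-verified Lean document; each statement's English description precedes it below -/
import Mathlib

section
/- For every natural number k there exists a strongly connected oriented graph D such that c(D) − c(G) > k, where G is the underlying undirected graph of D. -/
/-!
Let `p ≥ k + 3` be prime. On the plane `𝔽_p²` put the arcs `v → v + (x, x²)` for `x ≠ 0`, and add
an apex `∞` with arcs from every nonzero point to `∞` and from `∞` to `0`. The apex is adjacent to
every vertex of the underlying graph, so one cop wins there. In the digraph a robber on `v` may
move to any point of the translate `v + P` of the parabola `P = {(x, x²)}`. As `p` is odd, `P` is a
Sidon set, so two distinct translates of `P` meet in at most one point: a cop not on `v` threatens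
at most one of these `p` points, and fewer than `p` cops never catch the robber. Steps along
`(1, 1)` and `(-1, 1)` make the digraph strongly connected.
-/

open Classical

universe u

namespace CopsRobbers

variable {V : Type u}

/-- `CatchIn A k t c r` holds when, in the cops-and-robbers game on the digraph
with arc relation `A`, with the `k` cops currently at positions `c`, the robber
currently at `r`, and the cops to move, the cops can guarantee that some cop
occupies the robber's vertex within `t` further rounds (in each round every cop
either stays or moves along an out-arc, then the robber either stays or moves
along an out-arc; capture may occur right after the cops' move or after the
robber's move). -/
inductive CatchIn (A : V → V → Prop) (k : ℕ) : ℕ → (Fin k → V) → V → Prop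
  | caught {t : ℕ} {c : Fin k → V} {r : V} (h : ∃ i, c i = r) : CatchIn A k t c r
  | stepCatch {t : ℕ} {c : Fin k → V} {r : V} (c' : Fin k → V)
      (hc : ∀ i, c' i = c i ∨ A (c i) (c' i)) (h : ∃ i, c' i = r) :
      CatchIn A k (t + 1) c r
  | step {t : ℕ} {c : Fin k → V} {r : V} (c' : Fin k → V)
      (hc : ∀ i, c' i = c i ∨ A (c i) (c' i))
      (h : ∀ r' : V, r' = r ∨ A r r' → CatchIn A k t c' r') :
      CatchIn A k (t + 1) c r

/-- `k` cops can choose initial positions guaranteeing capture within `t` rounds,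
no matter which starting vertex the robber then chooses. -/
def CopsWinIn (A : V → V → Prop) (k t : ℕ) : Prop :=
  ∃ c : Fin k → V, ∀ r : V, CatchIn A k t c r

/-- `k` cops have a winning strategy on the digraph with arc relation `A`. -/
def CopsWin (A : V → V → Prop) (k : ℕ) : Prop := ∃ t, CopsWinIn A k t

/-- The cop number of a digraph: the least `k` such that `k` cops have a winning
strategy. -/
noncomputable def copNumber (A : V → V → Prop) : ℕ := sInf {k | CopsWin A k}

/-- The capture time of a digraph: the least `t` such that `copNumber A` cops
can guarantee capture within `t` rounds. -/
noncomputable def captureTime (A : V → V → Prop) : ℕ :=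
  sInf {t | CopsWinIn A (copNumber A) t}

/-- `A` is an orientation of the simple graph `G`: each edge of `G` is given
exactly one direction, and there are no other arcs. -/
def IsOrientation (G : SimpleGraph V) (A : V → V → Prop) : Prop :=
  (∀ u v, G.Adj u v ↔ (A u v ∨ A v u)) ∧ ∀ u v, A u v → ¬ A v u

/-- An oriented graph: a digraph with no loops and no pair of opposite arcs. -/
def IsOriented (A : V → V → Prop) : Prop := ∀ u v, A u v → ¬ A v u

/-- A digraph is strongly connected if every vertex is reachable from every
other by a directed path. -/
def StronglyConnected (A : V → V → Prop) : Prop :=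
  ∀ u v : V, Relation.ReflTransGen A u v

section Evasion

variable {A : V → V → Prop} {n : ℕ}

def Move (A : V → V → Prop) (u v : V) : Prop := v = u ∨ A u v

def Safe (A : V → V → Prop) (c : Fin n → V) (r : V) : Prop := ∀ i, ¬ Move A (c i) r

lemma Safe.ne_of_move {c c' : Fin n → V} {r : V} (hr : Safe A c r)
    (hc : ∀ i, Move A (c i) (c' i)) (i : Fin n) : c' i ≠ r :=
  fun h => hr i (h ▸ hc i)

lemma not_catchIn_of_evasion (R : V → Prop)
    (hstep : ∀ r, R r → ∀ c : Fin n → V, (∀ i, c i ≠ r) →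
      ∃ r', R r' ∧ Move A r r' ∧ Safe A c r')
    {t : ℕ} {c : Fin n → V} {r : V} (hR : R r) (hr : Safe A c r) : ¬ CatchIn A n t c r := by
  intro hcatch
  induction hcatch with
  | caught h =>
    obtain ⟨i, hi⟩ := h
    exact hr i (Or.inl hi.symm)
  | stepCatch c' hc h =>
    obtain ⟨i, hi⟩ := h
    exact hr.ne_of_move hc i hi
  | step c' hc _ ih =>
    obtain ⟨r', hR', hmove, hr'⟩ := hstep _ hR c' (hr.ne_of_move hc)
    exact ih r' hmove hR' hr'

theorem not_copsWin_of_evasion (R : V → Prop)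
    (hstart : ∀ c : Fin n → V, ∃ r, R r ∧ Safe A c r)
    (hstep : ∀ r, R r → ∀ c : Fin n → V, (∀ i, c i ≠ r) →
      ∃ r', R r' ∧ Move A r r' ∧ Safe A c r') :
    ¬ CopsWin A n := by
  rintro ⟨t, c, hc⟩
  obtain ⟨r, hR, hr⟩ := hstart c
  exact not_catchIn_of_evasion R hstep hR hr (hc r)

lemma exists_safe_of_card_lt {S : Finset V} {m : ℕ} (c : Fin n → V)
    (hcover : ∀ i, (S.filter (Move A (c i))).card ≤ m) (hcard : n * m < S.card) :
    ∃ r ∈ S, Safe A c r := by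
  by_contra! hunsafe
  have hsub : S ⊆ Finset.univ.biUnion fun i => S.filter (Move A (c i)) := by
    intro r hr
    obtain ⟨i, hi⟩ : ∃ i, Move A (c i) r := by simpa [Safe] using hunsafe r hr
    exact Finset.mem_biUnion.mpr ⟨i, Finset.mem_univ i, Finset.mem_filter.mpr ⟨hr, hi⟩⟩
  have := (Finset.card_le_card hsub).trans
    (Finset.card_biUnion_le_card_mul _ _ m fun i _ => hcover i)
  simp only [Finset.card_univ, Fintype.card_fin] at this
  omega

end Evasion

section CopNumber

lemma copsWin_card [Fintype V] (A : V → V → Prop) : CopsWin A (Fintype.card V) :=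
  ⟨0, fun i => (Fintype.equivFin V).symm i, fun r =>
    CatchIn.caught ⟨Fintype.equivFin V r, by simp⟩⟩

variable {A : V → V → Prop}

lemma copsWin_one_of_forall_adj {d : V} (hd : ∀ v, v ≠ d → A d v) : CopsWin A 1 := by
  refine ⟨1, fun _ => d, fun r => ?_⟩
  by_cases hr : r = d
  · exact CatchIn.caught ⟨0, hr.symm⟩
  · exact CatchIn.stepCatch (fun _ => r) (fun _ => Or.inr (hd r hr)) ⟨0, rfl⟩

lemma le_copNumber_of_not_copsWin [Fintype V] {k : ℕ} (h : ∀ n < k, ¬ CopsWin A n) :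
    k ≤ copNumber A := by
  by_contra! hlt
  exact h _ hlt (Nat.sInf_mem (s := {k | CopsWin A k}) ⟨_, copsWin_card A⟩)

lemma isOrientation_fromRel (hA : IsOriented A) :
    IsOrientation (SimpleGraph.fromRel A) A := by
  refine ⟨fun u v => ?_, hA⟩
  rw [SimpleGraph.fromRel_adj, and_iff_right_iff_imp]
  rintro (h | h) rfl <;> exact hA _ _ h h

end CopNumber

section Parabola

variable {F : Type*} [Field F]

def parabola (x : F) : F × F := (x, x ^ 2)

@[simp] lemma parabola_zero : parabola (0 : F) = 0 := by simp [parabola]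

lemma parabola_eq_zero {x : F} (h : parabola x = 0) : x = 0 := congrArg Prod.fst h

/-- The parabola is a Sidon set. -/
lemma eq_of_parabola_sub_eq (h2 : (2 : F) ≠ 0) {x s y t : F}
    (hd : parabola x - parabola s = parabola y - parabola t) (hxs : x ≠ s) : x = y := by
  have e1 : x - s = y - t := congrArg Prod.fst hd
  have e2 : x ^ 2 - s ^ 2 = y ^ 2 - t ^ 2 := congrArg Prod.snd hd
  have e3 : (x - s) * (x + s) = (x - s) * (y + t) := by
    linear_combination e2 - (y + t) * e1
  have e4 : x + s = y + t := mul_left_cancel₀ (sub_ne_zero.mpr hxs) e3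
  exact mul_left_cancel₀ h2 (by linear_combination e1 + e4)

/-- `none` is the apex `∞` of the construction. -/
def parabolaArc : Option (F × F) → Option (F × F) → Prop
  | some u, some v => ∃ x ≠ 0, v = u + parabola x
  | some u, none => u ≠ 0
  | none, some v => v = 0
  | none, none => False

lemma parabolaArc_isOriented (h2 : (2 : F) ≠ 0) : IsOriented (parabolaArc (F := F)) := by
  rintro (_ | u) (_ | v) h h'
  · exact h
  · exact h' h
  · exact h h'
  · obtain ⟨x, hx, rfl⟩ := h
    obtain ⟨y, -, hy⟩ := h'
    have hsum : parabola x + parabola y = 0 := by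
      rw [add_assoc] at hy
      exact left_eq_add.mp hy
    have e1 : x + y = 0 := congrArg Prod.fst hsum
    have e2 : x ^ 2 + y ^ 2 = 0 := congrArg Prod.snd hsum
    have : 2 * x ^ 2 = 0 := by linear_combination e2 - (y - x) * e1
    exact hx (pow_eq_zero_iff two_ne_zero |>.mp ((mul_eq_zero.mp this).resolve_left h2))

lemma move_some_some_iff {u v : F × F} :
    Move parabolaArc (some u) (some v) ↔ ∃ x, v = u + parabola x := by
  constructor
  · rintro (h | ⟨x, -, hx⟩)
    · exact ⟨0, by simpa using Option.some.inj h⟩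
    · exact ⟨x, hx⟩
  · rintro ⟨x, rfl⟩
    by_cases hx : x = 0
    · exact Or.inl (by simp [hx])
    · exact Or.inr ⟨x, hx, rfl⟩

lemma move_none_some_iff {v : F × F} : Move parabolaArc none (some v) ↔ v = 0 := by
  simp [Move, parabolaArc]

lemma exists_translate_of_move (u : Option (F × F)) :
    ∃ w, ∀ v, Move parabolaArc u (some v) → ∃ x, v = w + parabola x := by
  rcases u with _ | w
  · exact ⟨0, fun v hv => ⟨0, by simp [move_none_some_iff.mp hv]⟩⟩
  · exact ⟨w, fun v => move_some_some_iff.mp⟩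

/-- Two distinct translates of the parabola meet in at most one point. -/
lemma eq_of_move_of_move (h2 : (2 : F) ≠ 0) {u : Option (F × F)} {v : F × F}
    (hu : u ≠ some v) {x y : F} (hx : Move parabolaArc u (some (v + parabola x)))
    (hy : Move parabolaArc u (some (v + parabola y))) : x = y := by
  rcases u with _ | w
  · rw [move_none_some_iff] at hx hy
    exact congrArg Prod.fst (add_left_cancel (hx.trans hy.symm))
  · obtain ⟨s, hs⟩ := move_some_some_iff.mp hx
    obtain ⟨t, ht⟩ := move_some_some_iff.mp hy
    have hxs : x ≠ s := by
      rintro rfl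
      exact hu (congrArg some (add_right_cancel hs).symm)
    exact eq_of_parabola_sub_eq (y := y) (t := t) h2 (by linear_combination hs - ht) hxs

lemma fromRel_parabolaArc_adj_none {v : Option (F × F)} (hv : v ≠ none) :
    (SimpleGraph.fromRel parabolaArc).Adj none v := by
  obtain ⟨w, rfl⟩ := Option.ne_none_iff_exists'.mp hv
  rw [SimpleGraph.fromRel_adj]
  exact ⟨hv.symm, (Classical.em (w = 0)).imp id id⟩

variable [Fintype F] {n : ℕ}

lemma exists_safe_some (hn : n < Fintype.card F) (c : Fin n → Option (F × F)) :
    ∃ v, Safe parabolaArc c (some v) := by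
  have hcover (i : Fin n) :
      ((Finset.univ.map .some).filter (Move parabolaArc (c i))).card ≤ Fintype.card F := by
    obtain ⟨w, hw⟩ := exists_translate_of_move (c i)
    calc _ ≤ (Finset.univ.image fun x => some (w + parabola x)).card := by
          refine Finset.card_le_card fun r hr => ?_
          obtain ⟨hr, hmove⟩ := Finset.mem_filter.mp hr
          obtain ⟨v, -, rfl⟩ := Finset.mem_map.mp hr
          obtain ⟨x, rfl⟩ := hw v hmove
          exact Finset.mem_image_of_mem _ (Finset.mem_univ x)
      _ ≤ Fintype.card F := Finset.card_image_le
  have hcard : n * Fintype.card F < (Finset.univ.map .some : Finset (Option (F × F))).card := by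
    rw [Finset.card_map, Finset.card_univ, Fintype.card_prod]
    exact Nat.mul_lt_mul_of_pos_right hn Fintype.card_pos
  obtain ⟨r, hr, hsafe⟩ := exists_safe_of_card_lt c hcover hcard
  obtain ⟨v, -, rfl⟩ := Finset.mem_map.mp hr
  exact ⟨v, hsafe⟩

lemma exists_safe_add_parabola (h2 : (2 : F) ≠ 0) (hn : n < Fintype.card F) (v : F × F)
    (c : Fin n → Option (F × F)) (hc : ∀ i, c i ≠ some v) :
    ∃ x, Safe parabolaArc c (some (v + parabola x)) := by
  have hcover (i : Fin n) :
      ((Finset.univ.image fun x => some (v + parabola x)).filter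
        (Move parabolaArc (c i))).card ≤ 1 := by
    refine Finset.card_le_one.mpr fun a ha b hb => ?_
    obtain ⟨ha, hma⟩ := Finset.mem_filter.mp ha
    obtain ⟨hb, hmb⟩ := Finset.mem_filter.mp hb
    obtain ⟨x, -, rfl⟩ := Finset.mem_image.mp ha
    obtain ⟨y, -, rfl⟩ := Finset.mem_image.mp hb
    rw [eq_of_move_of_move h2 (hc i) hma hmb]
  have hcard : n * 1 < (Finset.univ.image fun x => some (v + parabola x)).card := by
    rw [Finset.card_image_of_injective _ fun x y hxy =>
      congrArg Prod.fst (add_left_cancel (Option.some.inj hxy))]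
    simpa using hn
  obtain ⟨r, hr, hsafe⟩ := exists_safe_of_card_lt c hcover hcard
  obtain ⟨x, -, rfl⟩ := Finset.mem_image.mp hr
  exact ⟨x, hsafe⟩

theorem not_copsWin_parabolaArc (h2 : (2 : F) ≠ 0) (hn : n < Fintype.card F) :
    ¬ CopsWin (parabolaArc (F := F)) n := by
  refine not_copsWin_of_evasion (fun r => ∃ v, r = some v) (fun c => ?_) ?_
  · obtain ⟨v, hv⟩ := exists_safe_some hn c
    exact ⟨_, ⟨v, rfl⟩, hv⟩
  · rintro _ ⟨v, rfl⟩ c hc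
    obtain ⟨x, hx⟩ := exists_safe_add_parabola h2 hn v c hc
    exact ⟨_, ⟨_, rfl⟩, move_some_some_iff.mpr ⟨x, rfl⟩, hx⟩

end Parabola

section ZMod

variable {p : ℕ} [Fact p.Prime]

lemma reflTransGen_parabolaArc_add_smul {x : ZMod p} (hx : x ≠ 0) (u : ZMod p × ZMod p)
    (c : ZMod p) :
    Relation.ReflTransGen parabolaArc (some u) (some (u + c • parabola x)) := by
  rw [← ZMod.natCast_zmod_val c, Nat.cast_smul_eq_nsmul]
  induction c.val with
  | zero => simpa using .refl
  | succ m ih => exact ih.tail ⟨x, hx, by rw [succ_nsmul, add_assoc]⟩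

/-- `(1, 1)` and `(-1, 1)` span the plane once `2` is invertible. -/
lemma reflTransGen_parabolaArc_some (h2 : (2 : ZMod p) ≠ 0) (u v : ZMod p × ZMod p) :
    Relation.ReflTransGen parabolaArc (some u) (some v) := by
  set a : ZMod p := ((v - u).2 + (v - u).1) / 2
  set b : ZMod p := ((v - u).2 - (v - u).1) / 2
  have hv : v = u + a • parabola 1 + b • parabola (-1) := by
    ext <;> simp [a, b, parabola] <;> field_simp <;> ring
  rw [hv]
  exact (reflTransGen_parabolaArc_add_smul one_ne_zero u a).trans
    (reflTransGen_parabolaArc_add_smul (neg_ne_zero.mpr one_ne_zero) _ b)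

lemma parabolaArc_stronglyConnected (h2 : (2 : ZMod p) ≠ 0) :
    StronglyConnected (parabolaArc (F := ZMod p)) := by
  have hreach := reflTransGen_parabolaArc_some h2
  rintro (_ | u) (_ | v)
  · exact .refl
  · exact .head (show parabolaArc none (some 0) from rfl) (hreach 0 v)
  · exact (hreach u (parabola 1)).tail fun h => one_ne_zero (parabola_eq_zero h)
  · exact hreach u v

end ZMod

/-- For every `k` there is a strongly connected oriented graph `D` with
`c(D) - c(G) > k`, where `G` is the underlying undirected graph of `D`. -/
theorem stmt_4 (k : ℕ) :
    ∃ (V : Type) (_ : Fintype V) (G : SimpleGraph V) (A : V → V → Prop),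
      IsOrientation G A ∧ StronglyConnected A ∧
      copNumber G.Adj + k < copNumber A := by
  obtain ⟨p, hkp, hp⟩ := Nat.exists_infinite_primes (k + 3)
  have : Fact p.Prime := ⟨hp⟩
  have h2 : (2 : ZMod p) ≠ 0 := Ring.two_ne_zero (by rw [ZMod.ringChar_zmod_n]; omega)
  refine ⟨Option (ZMod p × ZMod p), inferInstance, .fromRel parabolaArc, parabolaArc,
    isOrientation_fromRel (parabolaArc_isOriented h2), parabolaArc_stronglyConnected h2, ?_⟩
  have hG : copNumber (SimpleGraph.fromRel (parabolaArc (F := ZMod p))).Adj ≤ 1 :=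
    Nat.sInf_le (copsWin_one_of_forall_adj fun _ => fromRel_parabolaArc_adj_none)
  have hD : p ≤ copNumber (parabolaArc (F := ZMod p)) :=
    le_copNumber_of_not_copsWin fun n hn => not_copsWin_parabolaArc h2 (by rwa [ZMod.card])
  omega

end CopsRobbers
end

section
/- There exists a cop-win oriented graph D such that in every play of the game in which both players play optimally, the cop must revisit some vertex: at some point in the game the cop occupies a vertex that she previously occupied and had since left. -/
open Classical

universe u

namespace CopsRobbers

variable {V : Type u}

/-- A legal move in the game: stay put or move along an out-arc. -/
def Legal (A : V → V → Prop) (u v : V) : Prop := v = u ∨ A u v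

/-- The value of the position (one cop at `c`, robber at `r`, cop to move):
the least number of further rounds within which the cop can force capture
(`⊤` if she cannot). -/
noncomputable def copValue (A : V → V → Prop) (c r : V) : ℕ∞ :=
  sInf {n : ℕ∞ | ∃ m : ℕ, (m : ℕ∞) = n ∧ CatchIn A 1 m (fun _ => c) r}

/-- The value, for the cop, of moving to `c'` when the robber stands at `r`:
`0` if this captures the robber, and otherwise the worst-case value over all
of the robber's legal replies. -/
noncomputable def copMoveVal (A : V → V → Prop) (r c' : V) : ℕ∞ :=
  if c' = r then 0 else ⨆ r' ∈ {x : V | Legal A r x}, copValue A c' r'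

/-- The robber has not been caught during rounds `0, …, t`: after no cop move
and after no robber move up to time `t` do the two players share a vertex.
(Here `cop s` and `rob s` are the positions after round `s`; in round `s ≥ 1`
the cop moves first, so she captures at round `s` if `cop s = rob (s - 1)` or
`cop s = rob s`.) -/
def NotCaughtBy (cop rob : ℕ → V) (t : ℕ) : Prop :=
  ∀ s ≤ t, cop s ≠ rob s ∧ (1 ≤ s → cop s ≠ rob (s - 1))

/-- Both players play optimally in the play `(cop, rob)` (for one cop): the cop
chooses her start and each of her moves to minimize the worst-case number of
remaining rounds until capture, and the robber chooses his start and each of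
his moves to maximize the number of rounds until capture, all moves being
legal while the game is in progress. -/
structure OptimalPlay (A : V → V → Prop) (cop rob : ℕ → V) : Prop where
  copInit : ∀ v : V, (⨆ r : V, copValue A (cop 0) r) ≤ ⨆ r : V, copValue A v r
  robInit : ∀ r : V, copValue A (cop 0) r ≤ copValue A (cop 0) (rob 0)
  copLegal : ∀ t : ℕ, NotCaughtBy cop rob t → Legal A (cop t) (cop (t + 1))
  copOpt : ∀ t : ℕ, NotCaughtBy cop rob t → ∀ c' : V, Legal A (cop t) c' →
    copMoveVal A (rob t) (cop (t + 1)) ≤ copMoveVal A (rob t) c'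
  robLegal : ∀ t : ℕ, NotCaughtBy cop rob t → cop (t + 1) ≠ rob t →
    Legal A (rob t) (rob (t + 1))
  robOpt : ∀ t : ℕ, NotCaughtBy cop rob t → cop (t + 1) ≠ rob t →
    ∀ r' : V, Legal A (rob t) r' →
      copValue A (cop (t + 1)) r' ≤ copValue A (cop (t + 1)) (rob (t + 1))


/-!
The example is an explicit oriented graph on eight vertices. Its game values are certified by a
table `φ` satisfying the Bellman inequalities of the game, so `φ` is exactly `copValue`. Reading
off the table, the cop has a unique optimal start (vertex `3`), the robber a unique optimal reply
(vertex `6`), and from there every move of either player is forced up to round four, so that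
optimal play runs the cop along `3 → 5 → 0 → 7 → 1 → 5`, back to vertex `5`.
-/

/-- The Bellman inequalities of the one-cop game, whose solution `φ` is its value function
(`φ c r = ⊤` when the robber escapes forever). -/
structure IsValueCertificate (A : V → V → Prop) (φ : V → V → ℕ∞) : Prop where
  eq_zero_iff : ∀ c r, φ c r = 0 ↔ c = r
  exists_move : ∀ c r, c ≠ r → φ c r ≠ ⊤ → ∃ c', Legal A c c' ∧
    (c' = r ∨ ∀ r', Legal A r r' → φ c' r' + 1 ≤ φ c r)
  forall_move : ∀ c r, 2 ≤ φ c r → ∀ c', Legal A c c' →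
    c' ≠ r ∧ ∃ r', Legal A r r' ∧ φ c r ≤ φ c' r' + 1

namespace IsValueCertificate

variable {A : V → V → Prop} {φ : V → V → ℕ∞}

theorem catchIn (hφ : IsValueCertificate A φ) :
    ∀ {n : ℕ} {c r : V}, φ c r ≤ n → CatchIn A 1 n (fun _ => c) r := by
  intro n
  induction n with
  | zero => exact fun h => .caught ⟨0, (hφ.eq_zero_iff _ _).1 (nonpos_iff_eq_zero.1 h)⟩
  | succ n ih =>
    intro c r h
    by_cases hcr : c = r
    · exact .caught ⟨0, hcr⟩
    obtain ⟨c', hc', rfl | hdecr⟩ := hφ.exists_move c r hcr (ne_top_of_le_ne_top (by simp) h)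
    · exact .stepCatch _ (fun _ => hc') ⟨0, rfl⟩
    · refine .step _ (fun _ => hc') fun r' hr' => ih ?_
      rw [← ENat.add_le_add_iff_right ENat.one_ne_top]
      exact_mod_cast (hdecr r' hr').trans h

theorem le_of_catchIn (hφ : IsValueCertificate A φ) {m : ℕ} {c : Fin 1 → V} {r : V}
    (h : CatchIn A 1 m c r) : φ (c 0) r ≤ m := by
  induction h with
  | caught h =>
    obtain ⟨i, rfl⟩ := h
    simp [Fin.fin_one_eq_zero i, (hφ.eq_zero_iff _ _).2]
  | @stepCatch t c r c' hc h =>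
    obtain ⟨i, rfl⟩ := h
    by_cases h2 : 2 ≤ φ (c 0) (c' i)
    · exact absurd (by rw [Fin.fin_one_eq_zero i]) (hφ.forall_move _ _ h2 _ (hc 0)).1
    · exact (ENat.lt_two_iff.1 (not_le.1 h2)).trans (by exact_mod_cast Nat.le_add_left 1 t)
  | @step t c r c' hc _ ih =>
    by_cases h2 : 2 ≤ φ (c 0) r
    · obtain ⟨-, r', hr', hle⟩ := hφ.forall_move _ _ h2 _ (hc 0)
      exact hle.trans (by push_cast; gcongr; exact ih r' hr')
    · exact (ENat.lt_two_iff.1 (not_le.1 h2)).trans (by exact_mod_cast Nat.le_add_left 1 t)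

theorem copValue_eq (hφ : IsValueCertificate A φ) (c r : V) : copValue A c r = φ c r := by
  refine le_antisymm ?_ (le_sInf ?_)
  · cases hcr : φ c r using ENat.recTopCoe with
    | top => exact le_top
    | coe n => exact sInf_le ⟨n, rfl, hφ.catchIn hcr.le⟩
  · rintro _ ⟨m, rfl, h⟩
    exact hφ.le_of_catchIn h

end IsValueCertificate

theorem copMoveVal_eq_sup {A : V → V → Prop} [Fintype V] [DecidableEq V] [DecidableRel (Legal A)] (r c' : V) :
    copMoveVal A r c' =
      if c' = r then 0 else (Finset.univ.filter (Legal A r)).sup (copValue A c') := by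
  unfold copMoveVal
  split_ifs
  · rfl
  · simp [Finset.sup_eq_iSup]

theorem not_catchIn_zero {A : V → V → Prop} {t : ℕ} {c : Fin 0 → V} {r : V} :
    ¬ CatchIn A 0 t c r := by
  intro h
  induction h with
  | caught h => exact h.choose.elim0
  | stepCatch _ _ h => exact h.choose.elim0
  | step _ _ _ ih => exact ih _ (Or.inl rfl)

theorem copNumber_eq_one_of_copsWin [Nonempty V] {A : V → V → Prop} (h : CopsWin A 1) :
    copNumber A = 1 := by
  refine le_antisymm (Nat.sInf_le h) (Nat.one_le_iff_ne_zero.2 fun h₀ => ?_)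
  have hwin : {k | CopsWin A k}.Nonempty := ⟨1, h⟩
  obtain ⟨t, c, hc⟩ : CopsWin A 0 := h₀ ▸ Nat.sInf_mem hwin
  exact not_catchIn_zero (hc (Classical.arbitrary V))

theorem notCaughtBy_zero {cop rob : ℕ → V} (h : cop 0 ≠ rob 0) : NotCaughtBy cop rob 0 := by
  intro s hs
  obtain rfl := Nat.le_zero.1 hs
  exact ⟨h, by omega⟩

theorem NotCaughtBy.succ {cop rob : ℕ → V} {t : ℕ} (hnc : NotCaughtBy cop rob t)
    (hcop : cop (t + 1) ≠ rob t) (hrob : cop (t + 1) ≠ rob (t + 1)) :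
    NotCaughtBy cop rob (t + 1) := by
  intro s hs
  rcases Nat.lt_succ_iff_lt_or_eq.1 (Nat.lt_succ_of_le hs) with hs | rfl
  · exact hnc s (Nat.lt_succ_iff.1 hs)
  · exact ⟨hrob, fun _ => hcop⟩

def IsUniqueBestCopMove (A : V → V → Prop) (c r c' : V) : Prop :=
  Legal A c c' ∧ ∀ x, Legal A c x → x ≠ c' → copMoveVal A r c' < copMoveVal A r x

def IsUniqueBestRobberMove (A : V → V → Prop) (c r r' : V) : Prop :=
  Legal A r r' ∧ ∀ x, Legal A r x → x ≠ r' → copValue A c x < copValue A c r'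

namespace OptimalPlay

variable {A : V → V → Prop} {cop rob : ℕ → V}

theorem cop_zero_eq (ho : OptimalPlay A cop rob) {c₀ : V}
    (h : ∀ v ≠ c₀, (⨆ r, copValue A c₀ r) < ⨆ r, copValue A v r) : cop 0 = c₀ :=
  by_contra fun hne => (h _ hne).not_ge (ho.copInit c₀)

theorem rob_zero_eq (ho : OptimalPlay A cop rob) {r₀ : V}
    (h : ∀ r ≠ r₀, copValue A (cop 0) r < copValue A (cop 0) r₀) : rob 0 = r₀ :=
  by_contra fun hne => (h _ hne).not_ge (ho.robInit r₀)

theorem cop_succ_eq (ho : OptimalPlay A cop rob) {t : ℕ} {c' : V}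
    (hnc : NotCaughtBy cop rob t) (h : IsUniqueBestCopMove A (cop t) (rob t) c') :
    cop (t + 1) = c' :=
  by_contra fun hne => (h.2 _ (ho.copLegal t hnc) hne).not_ge (ho.copOpt t hnc c' h.1)

theorem rob_succ_eq (ho : OptimalPlay A cop rob) {t : ℕ} {r' : V}
    (hnc : NotCaughtBy cop rob t) (hcr : cop (t + 1) ≠ rob t)
    (h : IsUniqueBestRobberMove A (cop (t + 1)) (rob t) r') : rob (t + 1) = r' :=
  by_contra fun hne =>
    (h.2 _ (ho.robLegal t hnc hcr) hne).not_ge (ho.robOpt t hnc hcr r' h.1)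

theorem eq_of_forced (ho : OptimalPlay A cop rob) {cs rs : ℕ → V} {n : ℕ}
    (hcop₀ : cop 0 = cs 0) (hrob₀ : rob 0 = rs 0) (hne₀ : cs 0 ≠ rs 0)
    (hround : ∀ t < n, IsUniqueBestCopMove A (cs t) (rs t) (cs (t + 1)) ∧
      IsUniqueBestRobberMove A (cs (t + 1)) (rs t) (rs (t + 1)) ∧
      cs (t + 1) ≠ rs t ∧ cs (t + 1) ≠ rs (t + 1)) :
    ∀ t ≤ n, cop t = cs t ∧ rob t = rs t ∧ NotCaughtBy cop rob t := by
  intro t ht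
  induction t with
  | zero => exact ⟨hcop₀, hrob₀, notCaughtBy_zero (hcop₀ ▸ hrob₀ ▸ hne₀)⟩
  | succ t ih =>
    obtain ⟨hcop, hrob, hnc⟩ := ih (Nat.le_of_succ_le ht)
    obtain ⟨hcopMove, hrobMove, hne, hne'⟩ := hround t ht
    have hcop' := ho.cop_succ_eq hnc (hcop ▸ hrob ▸ hcopMove)
    have hrob' := ho.rob_succ_eq hnc (hcop' ▸ hrob ▸ hne) (hcop' ▸ hrob ▸ hrobMove)
    exact ⟨hcop', hrob', hnc.succ (hcop' ▸ hrob ▸ hne) (hcop' ▸ hrob' ▸ hne')⟩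

end OptimalPlay

namespace RevisitExample

def arcs : List (Fin 8 × Fin 8) :=
  [(0, 2), (0, 7), (1, 5), (1, 6), (2, 4), (3, 0), (3, 1), (3, 2), (3, 4), (3, 5), (3, 7),
   (4, 6), (5, 0), (5, 4), (5, 6), (6, 0), (6, 2), (7, 1), (7, 6)]

def A (u v : Fin 8) : Prop := (u, v) ∈ arcs

instance : DecidableRel A := fun u v => inferInstanceAs (Decidable ((u, v) ∈ arcs))

instance : DecidableRel (Legal A) := fun u v => inferInstanceAs (Decidable (v = u ∨ A u v))

def φ : Fin 8 → Fin 8 → ℕ∞ :=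
  ![![0, ⊤, 1, ⊤, 4, ⊤, ⊤, 1],
    ![⊤, 0, 6, ⊤, 2, 1, 1, ⊤],
    ![⊤, ⊤, 0, ⊤, 1, ⊤, ⊤, ⊤],
    ![1, 1, 1, 0, 1, 1, 6, 1],
    ![⊤, ⊤, ⊤, ⊤, 0, ⊤, 1, ⊤],
    ![1, ⊤, 5, ⊤, 1, 0, 1, ⊤],
    ![1, ⊤, 1, ⊤, ⊤, ⊤, 0, ⊤],
    ![⊤, 1, 7, ⊤, 3, ⊤, 1, 0]]

theorem isOriented : IsOriented A := by
  unfold IsOriented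
  decide

theorem isValueCertificate : IsValueCertificate A φ := ⟨by decide, by decide, by decide⟩

theorem copValue_eq_φ : copValue A = φ := funext₂ isValueCertificate.copValue_eq

theorem copNumber_eq_one : copNumber A = 1 :=
  copNumber_eq_one_of_copsWin
    ⟨6, fun _ => 3, fun r => isValueCertificate.catchIn (by revert r; decide)⟩

def copLine (t : ℕ) : Fin 8 := [3, 5, 0, 7, 1, 5].getD t 0

def robLine (t : ℕ) : Fin 8 := [6, 2, 4, 4, 4].getD t 0

theorem unique_best_cop_start : ∀ v ≠ 3, (⨆ r, copValue A 3 r) < ⨆ r, copValue A v r := by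
  simp only [copValue_eq_φ, ← Finset.sup_univ_eq_iSup]
  decide

theorem unique_best_robber_start : ∀ r ≠ 6, copValue A 3 r < copValue A 3 6 := by
  simp only [copValue_eq_φ]
  decide

theorem forced_rounds : ∀ t < 4,
    IsUniqueBestCopMove A (copLine t) (robLine t) (copLine (t + 1)) ∧
    IsUniqueBestRobberMove A (copLine (t + 1)) (robLine t) (robLine (t + 1)) ∧
    copLine (t + 1) ≠ robLine t ∧ copLine (t + 1) ≠ robLine (t + 1) := by
  simp only [IsUniqueBestCopMove, IsUniqueBestRobberMove, copMoveVal_eq_sup, copValue_eq_φ]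
  decide

theorem unique_best_last_move : IsUniqueBestCopMove A 1 4 5 := by
  simp only [IsUniqueBestCopMove, copMoveVal_eq_sup, copValue_eq_φ]
  decide

end RevisitExample

/-- There is a cop-win oriented graph on which, in every optimal play, the cop
must revisit a vertex: at some round `s` (while the game is in progress) she
occupies a vertex she occupied at an earlier round `t` and had left in
between. -/
theorem stmt_14 :
    ∃ (V : Type) (_ : Fintype V) (A : V → V → Prop),
      IsOriented A ∧ copNumber A = 1 ∧
      ∀ cop rob : ℕ → V, OptimalPlay A cop rob →
        ∃ t m s : ℕ, t < m ∧ m < s ∧ NotCaughtBy cop rob (s - 1) ∧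
          cop s = cop t ∧ cop m ≠ cop t := by
  open RevisitExample in
  refine ⟨Fin 8, inferInstance, A, isOriented, copNumber_eq_one, fun cop rob ho => ?_⟩
  have hcop₀ : cop 0 = 3 := ho.cop_zero_eq unique_best_cop_start
  have hrob₀ : rob 0 = 6 := ho.rob_zero_eq (hcop₀ ▸ unique_best_robber_start)
  have hline := ho.eq_of_forced (cs := copLine) (rs := robLine) hcop₀ hrob₀ (by decide)
    forced_rounds
  obtain ⟨hcop₄, hrob₄, hnc₄⟩ := hline 4 le_rfl
  have hcop₅ : cop 5 = 5 := ho.cop_succ_eq hnc₄ (hcop₄ ▸ hrob₄ ▸ unique_best_last_move)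
  have hcop₁ : cop 1 = 5 := (hline 1 (by norm_num)).1
  have hcop₂ : cop 2 = 0 := (hline 2 (by norm_num)).1
  exact ⟨1, 2, 5, by norm_num, by norm_num, hnc₄, hcop₅.trans hcop₁.symm, by
    rw [hcop₁, hcop₂]; decide⟩

end CopsRobbers
end
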